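/- Let α, β < 0 and D = diag(d₁,…,dₙ) ∈ Mₙ(ℍ_ℝ^{α,β}) a non-singular τ_r-hermitian diagonal matrix. Then there exists a τ_r-hermitian diagonal matrix P ∈ Mₙ(ℍ_ℝ^{α,β}) with D = P² = ᵗτ_r(P)·P. -/

import Mathlib

/-!
The `τ_r`-hermitian quaternions are those with vanishing `j`-coordinate. For `α, β < 0` a pure
one, `v = b i + c k`, squares to the real number `α b² - α β c² ≤ 0`, so every `τ_r`-hermitian
`q` lies in the image of an embedding `ℂ → ℍ_ℝ^{α,β}`, `I ↦ u`, with `u` itself `τ_r`-hermitian.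
The image of a complex square root of `q` is then a `τ_r`-hermitian square root, and taking
these entrywise gives `P`; for such a diagonal `P` we have `ᵗτ_r(P) = P`.
-/

open Quaternion Matrix

/-- The reversion `τ_r` on a quaternion algebra `ℍ_F^{α,β}`:
`q₀ + q₁ i + q₂ j + q₃ k ↦ q₀ + q₁ i - q₂ j + q₃ k`. -/
def tauRQ {F : Type*} [CommRing F] {α β : F} (q : ℍ[F, α, β]) : ℍ[F, α, β] :=
  ⟨q.re, q.imI, -q.imJ, q.imK⟩

theorem tauRQ_eq_self_iff {R : Type*} [CommRing R] [NoZeroDivisors R] [CharZero R] {α β : R}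
    {q : ℍ[R, α, β]} : tauRQ q = q ↔ q.imJ = 0 := by
  rw [← CharZero.neg_eq_self_iff]
  refine ⟨congrArg QuaternionAlgebra.imJ, fun h => ?_⟩
  ext <;> simp [tauRQ, h]

theorem transpose_map_tauRQ_diagonal {R : Type*} [CommRing R] {α β : R} {n : Type*}
    [DecidableEq n] {p : n → ℍ[R, α, β]} (hp : ∀ l, tauRQ (p l) = p l) :
    ((diagonal p).map tauRQ)ᵀ = diagonal p := by
  rw [diagonal_map (by ext <;> simp [tauRQ]), diagonal_transpose]
  exact congrArg diagonal (funext hp)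

namespace QuaternionAlgebra

theorem im_mul_im_of_imJ_eq_zero {R : Type*} [CommRing R] {α β : R} {q : ℍ[R, α, β]}
    (hq : q.imJ = 0) : q.im * q.im = ↑(α * q.imI ^ 2 - α * β * q.imK ^ 2) := by
  ext <;> simp only [re_coe, imI_coe, imJ_coe, imK_coe, re_mul, imI_mul, imJ_mul, imK_mul,
    re_im, imI_im, imJ_im, imK_im, hq] <;> ring

variable {α β : ℝ}

theorem exists_mul_self_eq_neg_one_of_imJ_eq_zero (hα : α < 0) (hβ : β < 0)
    {q : ℍ[ℝ, α, β]} (hq : q.imJ = 0) :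
    ∃ u : ℍ[ℝ, α, β], u.imJ = 0 ∧ u * u = -1 ∧ ∃ s : ℝ, q = q.re + s • u := by
  set N := α * q.imI ^ 2 - α * β * q.imK ^ 2 with hN
  have hI : α * q.imI ^ 2 ≤ 0 := mul_nonpos_of_nonpos_of_nonneg hα.le (sq_nonneg _)
  have hK : 0 ≤ α * β * q.imK ^ 2 := by have := mul_pos_of_neg_of_neg hα hβ; positivity
  rcases (show N ≤ 0 by linarith).lt_or_eq with hN_neg | hN_zero
  · set s := √(-N)
    have hs0 : s ≠ 0 := Real.sqrt_ne_zero'.mpr (by linarith)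
    have hs2 : s ^ 2 = -N := Real.sq_sqrt (by linarith)
    refine ⟨s⁻¹ • q.im, by simp [hq], ?_, s, ?_⟩
    · rw [smul_mul_smul_comm, im_mul_im_of_imJ_eq_zero hq, ← hN, ← coe_smul, ← coe_one,
        ← coe_neg, coe_inj, smul_eq_mul]
      field_simp
      linarith
    · rw [smul_smul, mul_inv_cancel₀ hs0, one_smul, re_add_im]
  · have hI0 : q.imI = 0 := by
      have : q.imI ^ 2 = 0 := by nlinarith
      simpa using this
    have hK0 : q.imK = 0 := by
      have : q.imK ^ 2 = 0 := by nlinarith [mul_pos_of_neg_of_neg hα hβ]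
      simpa using this
    have hα' : α * (√(-α))⁻¹ * (√(-α))⁻¹ = -1 := by
      rw [mul_assoc, ← mul_inv, ← sq, Real.sq_sqrt (by linarith), inv_neg, mul_neg,
        mul_inv_cancel₀ hα.ne]
    refine ⟨⟨0, (√(-α))⁻¹, 0, 0⟩, rfl, ?_, 0, ?_⟩
    · ext <;> simp [hα']
    · ext <;> simp [hq, hI0, hK0]

theorem exists_mul_self_eq_of_imJ_eq_zero (hα : α < 0) (hβ : β < 0)
    {q : ℍ[ℝ, α, β]} (hq : q.imJ = 0) : ∃ p : ℍ[ℝ, α, β], p.imJ = 0 ∧ p * p = q := by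
  obtain ⟨u, huJ, hu, s, hqs⟩ := exists_mul_self_eq_neg_one_of_imJ_eq_zero hα hβ hq
  obtain ⟨w, hw⟩ := IsAlgClosed.exists_eq_mul_self (⟨q.re, s⟩ : ℂ)
  refine ⟨Complex.liftAux u hu w, ?_, ?_⟩
  · simp [Complex.liftAux_apply, huJ]
  · rw [← map_mul, ← hw, Complex.liftAux_apply]
    exact hqs.symm

end QuaternionAlgebra

theorem stmt14_general (α β : ℝ) (hα : α < 0) (hβ : β < 0) (n : ℕ)
    (d : Fin n → ℍ[ℝ, α, β]) (hd : ∀ l, tauRQ (d l) = d l) :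
    ∃ p : Fin n → ℍ[ℝ, α, β], (∀ l, tauRQ (p l) = p l) ∧
      Matrix.diagonal d = (Matrix.diagonal p) ^ 2 ∧
      Matrix.diagonal d = ((Matrix.diagonal p).map tauRQ)ᵀ * Matrix.diagonal p := by
  choose p hpJ hpd using fun l =>
    QuaternionAlgebra.exists_mul_self_eq_of_imJ_eq_zero hα hβ (tauRQ_eq_self_iff.mp (hd l))
  have hp : ∀ l, tauRQ (p l) = p l := fun l => tauRQ_eq_self_iff.mpr (hpJ l)
  have hD : diagonal d = diagonal p ^ 2 := by
    rw [sq, diagonal_mul_diagonal]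
    exact congrArg diagonal (funext hpd).symm
  exact ⟨p, hp, hD, by rw [transpose_map_tauRQ_diagonal hp, ← sq, hD]⟩

/-- for `α, β < 0`, every non-singular `τ_r`-hermitian diagonal
matrix `D ∈ Mₙ(ℍ_ℝ^{α,β})` has a `τ_r`-hermitian diagonal square root `P`, with
`D = P² = ᵗτ_r(P)·P`. -/
theorem stmt14 (α β : ℝ) (hα : α < 0) (hβ : β < 0) (n : ℕ)
    (d : Fin n → ℍ[ℝ, α, β]) (hd : ∀ l, tauRQ (d l) = d l)
    (hDu : IsUnit (Matrix.diagonal d)) :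
    ∃ p : Fin n → ℍ[ℝ, α, β], (∀ l, tauRQ (p l) = p l) ∧
      Matrix.diagonal d = (Matrix.diagonal p) ^ 2 ∧
      Matrix.diagonal d = ((Matrix.diagonal p).map tauRQ)ᵀ * Matrix.diagonal p :=
  stmt14_general α β hα hβ n d hd
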